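/- Let n ≥ 3. For every Ẑ ∈ 𝕃(n) there exist vectors v₁, …, v_{n+2} ∈ ℂ^n that are linearly independent over ℝ, such that for each k = 1, …, n+2 the affine straight line {Ẑ + t·v_k : t ∈ ℝ} is entirely contained in 𝕃(n). -/

import Mathlib

open Complex

noncomputable section

def Lset (n : ℕ) : Set (Fin n → ℂ) :=
  {Z | (¬ ∃ b : ℂ, ∀ j, Z j = b) ∧ ∃ (a b : ℂ) (X : Fin n → ℝ), ∀ j, Z j = a * (X j) + b}

theorem Lset_contains_indep_lines (m : ℕ) (Zhat : Fin (m + 3) → ℂ)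
    (hZ : Zhat ∈ Lset (m + 3)) :
    ∃ v : Fin (m + 5) → (Fin (m + 3) → ℂ),
      LinearIndependent ℝ v ∧
      (∀ (k) (t : ℝ), (fun j => Zhat j + (t : ℂ) * v k j) ∈ Lset (m + 3)) := by
  classical
  simp only [Lset, Set.mem_setOf_eq] at hZ
  obtain ⟨hnc, a, b, X, hX⟩ := hZ
  have ha : a ≠ 0 := by
    rintro rfl
    exact hnc ⟨b, fun j => by simp [hX j]⟩
  obtain ⟨p, q, hpq⟩ : ∃ p q : Fin (m+3), X p ≠ X q := by
    by_contra h
    push_neg at h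
    exact hnc ⟨a * X 0 + b, fun j => by rw [hX j, h j 0]⟩
  have hpq' : p ≠ q := fun h => hpq (by rw [h])
  have hd : ((X p : ℂ) - X q) ≠ 0 := sub_ne_zero.mpr (by exact_mod_cast hpq)
  have hcard : ({p, q}ᶜ : Finset (Fin (m+3))).card = m + 1 := by
    rw [Finset.card_compl, Finset.card_pair hpq']
    simp
  set f : Fin (m+1) → Fin (m+3) :=
    fun k => (({p,q}ᶜ : Finset (Fin (m+3))).orderIsoOfFin hcard k : Fin (m+3)) with hf
  have hf_inj : Function.Injective f := fun k l h =>
    (({p,q}ᶜ : Finset (Fin (m+3))).orderIsoOfFin hcard).injective (Subtype.ext h)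
  have hfmem : ∀ k, f k ≠ p ∧ f k ≠ q := by
    intro k
    have := (({p,q}ᶜ : Finset (Fin (m+3))).orderIsoOfFin hcard k).2
    simp only [Finset.mem_compl, Finset.mem_insert, Finset.mem_singleton, not_or] at this
    exact this
  -- the family of vectors
  set u : Fin (m+1) → Fin (m+3) → ℂ := fun k j => if j = f k then a else 0 with hu
  set w0 : Fin (m+3) → ℂ := fun _ => 1 with hw0
  set w1 : Fin (m+3) → ℂ := fun _ => I with hw1
  set w2 : Fin (m+3) → ℂ := fun j => I * a * X j with hw2
  set w3 : Fin (m+3) → ℂ := fun j => (1 + I) * a * X j with hw3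
  set v : Fin (m+5) → Fin (m+3) → ℂ :=
    Fin.cons w0 (Fin.cons w1 (Fin.cons w2 (Fin.cons w3 u))) with hv
  -- linear functionals used to prove non-membership in spans
  set θ : (Fin (m+3) → ℂ) →ₗ[ℝ] ℂ :=
    { toFun := fun z => ((X p : ℂ) - X q) * z p - (X p : ℂ) * (z p - z q)
      map_add' := by intro z w; simp only [Pi.add_apply]; ring
      map_smul' := by intro r z; simp only [Pi.smul_apply, Complex.real_smul,
        RingHom.id_apply]; ring } with hθ
  set χ : (Fin (m+3) → ℂ) →ₗ[ℝ] ℂ :=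
    { toFun := fun z => (z p - z q) * (a * ((X p : ℂ) - X q))⁻¹
      map_add' := by intro z w; simp only [Pi.add_apply]; ring
      map_smul' := by intro r z; simp only [Pi.smul_apply, Complex.real_smul,
        RingHom.id_apply]; ring } with hχ
  have key : ∀ (L : (Fin (m+3) → ℂ) →ₗ[ℝ] ℝ) (S : Set (Fin (m+3) → ℂ)) z,
      (∀ y ∈ S, L y = 0) → z ∈ Submodule.span ℝ S → L z = 0 := by
    intro L S z hS hz
    exact (Submodule.span_le.mpr fun y hy => LinearMap.mem_ker.mpr (hS y hy) :
      Submodule.span ℝ S ≤ LinearMap.ker L) hz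
  -- values of the functionals on the generators
  have hup : ∀ k, u k p = 0 := fun k => if_neg (fun h => (hfmem k).1 h.symm)
  have huq : ∀ k, u k q = 0 := fun k => if_neg (fun h => (hfmem k).2 h.symm)
  have hχu : ∀ k, χ (u k) = 0 := by intro k; simp [hχ, hup k, huq k]
  have hθu : ∀ k, θ (u k) = 0 := by intro k; simp [hθ, hup k, huq k]
  have hχ3 : χ w3 = 1 + I := by
    simp only [hχ, hw3, LinearMap.coe_mk, AddHom.coe_mk]
    field_simp
  have hχ2 : χ w2 = I := by
    simp only [hχ, hw2, LinearMap.coe_mk, AddHom.coe_mk]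
    field_simp
  have hθ2 : θ w2 = 0 := by
    simp only [hθ, hw2, LinearMap.coe_mk, AddHom.coe_mk]; ring
  have hθ3 : θ w3 = 0 := by
    simp only [hθ, hw3, LinearMap.coe_mk, AddHom.coe_mk]; ring
  have hθ1 : θ w1 = ((X p : ℂ) - X q) * I := by
    simp only [hθ, hw1, LinearMap.coe_mk, AddHom.coe_mk]; ring
  have hθ0 : θ w0 = ((X p : ℂ) - X q) := by
    simp only [hθ, hw0, LinearMap.coe_mk, AddHom.coe_mk]; ring
  have hu_li : LinearIndependent ℝ u := by
    rw [Fintype.linearIndependent_iff]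
    intro g hg i
    have h := congrFun hg (f i)
    simp only [hu, Finset.sum_apply, Pi.smul_apply, Pi.zero_apply, smul_ite, smul_zero,
      hf_inj.eq_iff, Finset.sum_ite_eq, Finset.mem_univ, if_true] at h
    rcases smul_eq_zero.mp h with h' | h'
    · exact h'
    · exact absurd h' ha
  have hv_li : LinearIndependent ℝ v := by
    rw [hv, linearIndependent_fin_cons, linearIndependent_fin_cons,
      linearIndependent_fin_cons, linearIndependent_fin_cons]
    simp only [Fin.range_cons]
    refine ⟨⟨⟨⟨hu_li, ?_⟩, ?_⟩, ?_⟩, ?_⟩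
    · -- w3 ∉ span (range u)
      intro hmem
      have h0 := key (Complex.reLm.comp χ) _ _ (by
        rintro y ⟨k, rfl⟩
        simp [hχu k]) hmem
      rw [LinearMap.comp_apply, hχ3] at h0
      simp at h0
    · -- w2 ∉ span (insert w3 (range u))
      intro hmem
      have h0 := key (Complex.reLm.comp χ - Complex.imLm.comp χ) _ _ (by
        rintro y (rfl | ⟨k, rfl⟩)
        · simp [hχ3]
        · simp [hχu k]) hmem
      rw [LinearMap.sub_apply, LinearMap.comp_apply, LinearMap.comp_apply, hχ2] at h0
      simp at h0
    · -- w1 ∉ span (insert w2 (insert w3 (range u)))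
      intro hmem
      have h0 := key (Complex.imLm.comp θ) _ _ (by
        rintro y (rfl | rfl | ⟨k, rfl⟩)
        · simp [hθ2]
        · simp [hθ3]
        · simp [hθu k]) hmem
      rw [LinearMap.comp_apply, hθ1] at h0
      simp [sub_eq_zero] at h0
      exact hpq (by exact_mod_cast h0)
    · -- w0 ∉ span (insert w1 (insert w2 (insert w3 (range u))))
      intro hmem
      have h0 := key (Complex.reLm.comp θ) _ _ (by
        rintro y (rfl | rfl | rfl | ⟨k, rfl⟩)
        · simp [hθ1]
        · simp [hθ2]
        · simp [hθ3]
        · simp [hθu k]) hmem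
      rw [LinearMap.comp_apply, hθ0] at h0
      simp [sub_eq_zero] at h0
      exact hpq (by exact_mod_cast h0)
  refine ⟨v, hv_li, ?_⟩
  intro k t
  simp only [Lset, Set.mem_setOf_eq]
  induction k using Fin.cases with
  | zero =>
    simp only [hv, Fin.cons_zero, hw0]
    refine ⟨?_, a, b + t, X, fun j => by linear_combination hX j⟩
    rintro ⟨b', hb⟩
    exact hnc ⟨b' - t, fun j => by linear_combination hb j⟩
  | succ k =>
    induction k using Fin.cases with
    | zero =>
      simp only [hv, Fin.cons_succ, Fin.cons_zero, hw1]
      refine ⟨?_, a, b + t * I, X, fun j => by linear_combination hX j⟩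
      rintro ⟨b', hb⟩
      exact hnc ⟨b' - t * I, fun j => by linear_combination hb j⟩
    | succ k =>
      induction k using Fin.cases with
      | zero =>
        simp only [hv, Fin.cons_succ, Fin.cons_zero, hw2]
        refine ⟨?_, a + t * I * a, b, X, fun j => by linear_combination hX j⟩
        rintro ⟨b', hb⟩
        have h3 : (a * (1 + (t : ℂ) * I)) * ((X p : ℂ) - X q) = 0 := by
          linear_combination hb p - hb q - hX p + hX q
        rcases mul_eq_zero.mp h3 with h | h
        · rcases mul_eq_zero.mp h with h' | h'
          · exact ha h'
          · have := congrArg Complex.re h'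
            simp at this
        · exact hd h
      | succ k =>
        induction k using Fin.cases with
        | zero =>
          simp only [hv, Fin.cons_succ, Fin.cons_zero, hw3]
          refine ⟨?_, a + t * (1 + I) * a, b, X, fun j => by linear_combination hX j⟩
          rintro ⟨b', hb⟩
          have h3 : (a * (1 + (t : ℂ) * (1 + I))) * ((X p : ℂ) - X q) = 0 := by
            linear_combination hb p - hb q - hX p + hX q
          rcases mul_eq_zero.mp h3 with h | h
          · rcases mul_eq_zero.mp h with h' | h'
            · exact ha h'
            · have hre := congrArg Complex.re h'
              have him := congrArg Complex.im h'
              simp at hre him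
              linarith
          · exact hd h
        | succ k =>
          simp only [hv, Fin.cons_succ, hu]
          refine ⟨?_, a, b, fun j => X j + if j = f k then t else 0, fun j => ?_⟩
          · rintro ⟨b', hb⟩
            have hp' : ¬ p = f k := fun h => (hfmem k).1 h.symm
            have hq' : ¬ q = f k := fun h => (hfmem k).2 h.symm
            have h1 := hb p
            have h2 := hb q
            rw [if_neg hp'] at h1
            rw [if_neg hq'] at h2
            have h3 : a * ((X p : ℂ) - X q) = 0 := by
              linear_combination h1 - h2 - hX p + hX q
            rcases mul_eq_zero.mp h3 with h | h
            · exact ha h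
            · exact hd h
          · rcases eq_or_ne j (f k) with h | h
            · simp only [h, if_pos rfl]
              push_cast
              linear_combination hX (f k)

            · simp only [if_neg h, add_zero]
              linear_combination hX j
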